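/- Let f be a functional in the norming set D_wh of X_wh and let (x_k)_{k=1}^d be disjointly supported vectors in X_wh. There exists a disjointly supported sequence (g_k)_{k=1}^d ⊂ D_wh with supp g_k ⊆ supp f for all k such that f(∑_{k=1}^d x_k) ≤ (∑_{k=1}^d |g_k(x_k)|^2)^{1/2}. Consequently ‖∑_{k=1}^d x_k‖ ≤ (∑_{k=1}^d ‖x_k‖^2)^{1/2} for disjointly supported vectors. -/
import Mathlib


/-- The first Schreier family: finite sets `F` with `|F| ≤ min F`. -/
def SchreierOne : Set (Finset ℕ) := {F | ∀ k ∈ F, F.card ≤ k}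

/-- The minimum of a finite set of naturals (0 for the empty set). -/
noncomputable def finMin (F : Finset ℕ) : ℕ := sInf {k | k ∈ F}

/-- The convolution `P[Q]` of two families of finite subsets of ℕ:
unions of successive members of `Q` whose minima form a set in `P`. -/
def conv (P Q : Set (Finset ℕ)) : Set (Finset ℕ) :=
  {U | ∃ (d : ℕ) (F : Fin d → Finset ℕ),
    (∀ i, F i ∈ Q) ∧ (∀ i, (F i).Nonempty) ∧
    (∀ i j : Fin d, i < j → ∀ a ∈ F i, ∀ b ∈ F j, a < b) ∧
    (Finset.univ.image fun i => finMin (F i)) ∈ P ∧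
    U = Finset.univ.biUnion F}

/-- The modified convolution `P[Q]_M`: unions of pairwise disjoint members of `Q`
whose minima form a set in `P`. -/
def mconv (P Q : Set (Finset ℕ)) : Set (Finset ℕ) :=
  {U | ∃ (d : ℕ) (F : Fin d → Finset ℕ),
    (∀ i, F i ∈ Q) ∧ (∀ i, (F i).Nonempty) ∧
    (∀ i j : Fin d, i ≠ j → Disjoint (F i) (F j)) ∧
    (Finset.univ.image fun i => finMin (F i)) ∈ P ∧
    U = Finset.univ.biUnion F}

/-- The Schreier families `S_n` (indexed so that `Schreier 1 = S_1`,
`Schreier (n+1) = S_1[S_n]`). -/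
def Schreier : ℕ → Set (Finset ℕ)
  | 0 => {F | F.card ≤ 1}
  | 1 => SchreierOne
  | (n+2) => conv SchreierOne (Schreier (n+1))

/-- The modified Schreier families `S^M_n`. -/
def SchreierM : ℕ → Set (Finset ℕ)
  | 0 => {F | F.card ≤ 1}
  | 1 => SchreierOne
  | (n+2) => mconv SchreierOne (SchreierM (n+1))

/-- The sequence `m_j`: `m_0 = m_1 = 2`, `m_{j+1} = m_j^3`. -/
def mseq : ℕ → ℕ
  | 0 => 2
  | 1 => 2
  | (j+2) => (mseq (j+1)) ^ 3

/-- `ℓ_j = 3 log_2 m_j + 1`. -/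
def lseq (j : ℕ) : ℕ := 3 * Nat.log 2 (mseq j) + 1

/-- The sequence `n_j`: `n_0 = 1` and `n_{j+1} > ℓ_{j+1}(n_j + 1)`. -/
def nseq : ℕ → ℕ
  | 0 => 1
  | (j+1) => lseq (j+1) * (nseq j + 1) + 1

/-- The minimum of the support of an element of `c_00` (0 if empty). -/
noncomputable def minsupp (f : ℕ →₀ ℝ) : ℕ := sInf {k | f k ≠ 0}

/-- The maximum of the support of an element of `c_00` (0 if empty). -/
noncomputable def maxsupp (f : ℕ →₀ ℝ) : ℕ := sSup {k | f k ≠ 0}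

/-- Membership in the set `Σ` of candidate special sequences: a nonempty finite list of
pairs `(E_i, j_i)` with the `E_i` pairwise disjoint nonempty finite sets, the `j_i`
strictly increasing, `j_1 ∈ N_1` and `j_i ∈ N_2` for `i > 1`. -/
def InSigma (N1 N2 : Set ℕ) (l : List (Finset ℕ × ℕ)) : Prop :=
  l ≠ [] ∧
  l.Pairwise (fun a b => Disjoint a.1 b.1) ∧
  l.Chain' (fun a b => a.2 < b.2) ∧
  (∀ a ∈ l.head?, a.2 ∈ N1) ∧
  (∀ a ∈ l.tail, a.2 ∈ N2) ∧
  (∀ a ∈ l, a.1.Nonempty)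

/-- `l` is a `σ`-special sequence: it lies in `Σ` and `σ` of each proper initial
segment gives the next index. -/
def IsSpecial (N1 N2 : Set ℕ) (σ : List (Finset ℕ × ℕ) → ℕ)
    (l : List (Finset ℕ × ℕ)) : Prop :=
  InSigma N1 N2 l ∧
  ∀ (i : ℕ) (h : i + 1 < l.length), σ (l.take (i + 1)) = (l.get ⟨i + 1, h⟩).2

/-- `σ` is an admissible coding: it maps `Σ` into `N_2`, is injective on `Σ`, its values
dominate the indices appearing in the sequence, and it satisfies the growth condition
`m_{2σ(s⌢(E,j))} > m_{2σ(s)}·(max E_last)^2`. -/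
def GoodCoding (N1 N2 : Set ℕ) (σ : List (Finset ℕ × ℕ) → ℕ) : Prop :=
  (∀ l, InSigma N1 N2 l → σ l ∈ N2) ∧
  (∀ l l', InSigma N1 N2 l → InSigma N1 N2 l' → σ l = σ l' → l = l') ∧
  (∀ l, InSigma N1 N2 l → ∀ a ∈ l, a.2 < σ l) ∧
  (∀ (l : List (Finset ℕ × ℕ)) (a : Finset ℕ × ℕ) (h : l ≠ []),
      InSigma N1 N2 l → InSigma N1 N2 (l ++ [a]) →
      mseq (2 * σ l) * (sSup {k | k ∈ (l.getLast h).1}) ^ 2 < mseq (2 * σ (l ++ [a])))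

/-- The norming set `D_wh` of the space `X_wh`, together with weights: the minimal set of
finitely supported functionals containing `±e_k^*` and closed under the modified
`ℓ_2-(1/m_{2j}, S_{n_{2j}})` operations (even case) and under the `ℓ_2` operations on
`S_{n_{2j+1}}` `σ`-special sequences of functionals (odd case). -/
inductive DW (N1 N2 : Set ℕ) (σ : List (Finset ℕ × ℕ) → ℕ) : (ℕ →₀ ℝ) → ℕ → Prop where
  | pos (k : ℕ) : DW N1 N2 σ (Finsupp.single k 1) 0
  | neg (k : ℕ) : DW N1 N2 σ (Finsupp.single k (-1)) 0
  | even (j p : ℕ) (f : Fin p → ℕ →₀ ℝ) (w : Fin p → ℕ) (lam : Fin p → ℝ)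
      (hmem : ∀ i, DW N1 N2 σ (f i) (w i))
      (hdisj : ∀ i i', i ≠ i' → Disjoint (f i).support (f i').support)
      (hallow : (Finset.univ.image fun i => minsupp (f i)) ∈ SchreierM (nseq (2 * j)))
      (hlam : (∑ i, (lam i) ^ 2) ≤ 1) :
      DW N1 N2 σ (((mseq (2 * j) : ℕ) : ℝ)⁻¹ • ∑ i, lam i • f i) (mseq (2 * j))
  | odd (j p : ℕ) (f : Fin p → ℕ →₀ ℝ) (E : Fin p → Finset ℕ) (js : Fin p → ℕ)
      (lam : Fin p → ℝ)
      (hmem : ∀ i, DW N1 N2 σ (f i) (mseq (2 * js i)))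
      (hsupp : ∀ i, (f i).support ⊆ E i)
      (hspec : IsSpecial N1 N2 σ (List.ofFn fun i => (E i, js i)))
      (hallow : (Finset.univ.image fun i => finMin (E i)) ∈ SchreierM (nseq (2 * j + 1)))
      (hbig : ∀ i, 2 * j + 2 < 2 * js i)
      (hlam : (∑ i, (lam i) ^ 2) ≤ 1) :
      DW N1 N2 σ (((mseq (2 * j + 1) : ℕ) : ℝ)⁻¹ • ∑ i, lam i • f i) (mseq (2 * j + 1))

/-- Membership in the norming set `D_wh` (forgetting the weight). -/
def DWh (N1 N2 : Set ℕ) (σ : List (Finset ℕ × ℕ) → ℕ) (f : ℕ →₀ ℝ) : Prop :=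
  ∃ w, DW N1 N2 σ f w

/-- The action of a finitely supported functional on an element of `c_00`. -/
def dotp (f x : ℕ →₀ ℝ) : ℝ := f.sum fun k v => v * x k

/-- The norm of `X_wh` on `c_00`: `‖x‖ = sup {f(x) : f ∈ D_wh}`. -/
noncomputable def wnorm (N1 N2 : Set ℕ) (σ : List (Finset ℕ × ℕ) → ℕ)
    (x : ℕ →₀ ℝ) : ℝ :=
  sSup {r | ∃ f, DWh N1 N2 σ f ∧ r = dotp f x}


section Aux

open Finset

lemma dotp_eq_sum (f x : ℕ →₀ ℝ) (s : Finset ℕ) (hs : f.support ⊆ s) :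
    dotp f x = ∑ n ∈ s, f n * x n := by
  rw [dotp, Finsupp.sum]
  exact Finset.sum_subset hs (fun n _ hn => by
    simp [Finsupp.notMem_support_iff.mp hn])

lemma dotp_zero (x : ℕ →₀ ℝ) : dotp 0 x = 0 := by simp [dotp]

lemma dotp_neg (f x : ℕ →₀ ℝ) : dotp (-f) x = - dotp f x := by
  rw [dotp_eq_sum (-f) x f.support (by simp), dotp_eq_sum f x f.support subset_rfl,
    ← Finset.sum_neg_distrib]
  exact Finset.sum_congr rfl (fun n _ => by simp)

lemma dotp_neg_right (f x : ℕ →₀ ℝ) : dotp f (-x) = - dotp f x := by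
  rw [dotp_eq_sum f (-x) f.support subset_rfl, dotp_eq_sum f x f.support subset_rfl,
    ← Finset.sum_neg_distrib]
  exact Finset.sum_congr rfl (fun n _ => by simp)

lemma dotp_smul (c : ℝ) (f x : ℕ →₀ ℝ) : dotp (c • f) x = c * dotp f x := by
  rw [dotp_eq_sum (c • f) x f.support (Finsupp.support_smul),
    dotp_eq_sum f x f.support subset_rfl, Finset.mul_sum]
  exact Finset.sum_congr rfl (fun n _ => by simp [mul_assoc])

lemma dotp_sum_left {p : ℕ} (f : Fin p → ℕ →₀ ℝ) (x : ℕ →₀ ℝ) :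
    dotp (∑ i, f i) x = ∑ i, dotp (f i) x := by
  classical
  set s := Finset.univ.biUnion (fun i => (f i).support) with hsdef
  have h1 : (∑ i, f i).support ⊆ s := by
    refine (Finsupp.support_finset_sum).trans ?_
    exact subset_rfl
  rw [dotp_eq_sum _ x s h1]
  have h2 : ∀ i, dotp (f i) x = ∑ n ∈ s, f i n * x n := fun i =>
    dotp_eq_sum (f i) x s (fun n hn => Finset.mem_biUnion.mpr ⟨i, Finset.mem_univ i, hn⟩)
  simp only [h2]
  rw [Finset.sum_comm]
  refine Finset.sum_congr rfl (fun n _ => ?_)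
  rw [← Finset.sum_mul]
  congr 1
  exact Finsupp.finset_sum_apply _ _ _

lemma dotp_sum_right {d : ℕ} (f : ℕ →₀ ℝ) (x : Fin d → ℕ →₀ ℝ) :
    dotp f (∑ k, x k) = ∑ k, dotp f (x k) := by
  rw [dotp_eq_sum f _ f.support subset_rfl]
  have h2 : ∀ k, dotp f (x k) = ∑ n ∈ f.support, f n * x k n := fun k =>
    dotp_eq_sum f (x k) f.support subset_rfl
  simp only [h2]
  rw [Finset.sum_comm]
  refine Finset.sum_congr rfl (fun n _ => ?_)
  rw [← Finset.mul_sum]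
  congr 1
  exact Finsupp.finset_sum_apply _ _ _

lemma dotp_single (k : ℕ) (c : ℝ) (x : ℕ →₀ ℝ) :
    dotp (Finsupp.single k c) x = c * x k := by
  rw [dotp]
  exact Finsupp.sum_single_index (by simp)

lemma finMin_mem {F : Finset ℕ} (h : F.Nonempty) : finMin F ∈ F := by
  obtain ⟨a, ha⟩ := h
  exact Nat.sInf_mem ⟨a, ha⟩

lemma finMin_le {F : Finset ℕ} {a : ℕ} (h : a ∈ F) : finMin F ≤ a := Nat.sInf_le h

lemma minsupp_mem {f : ℕ →₀ ℝ} (h : f ≠ 0) : minsupp f ∈ f.support := by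
  have h2 : {k | f k ≠ 0}.Nonempty := by
    obtain ⟨n, hn⟩ := Finsupp.ne_iff.mp h
    exact ⟨n, by simpa using hn⟩
  have := Nat.sInf_mem h2
  simpa [minsupp, Finsupp.mem_support_iff] using this

lemma minsupp_le {f : ℕ →₀ ℝ} {a : ℕ} (h : a ∈ f.support) : minsupp f ≤ a :=
  Nat.sInf_le (by simpa using Finsupp.mem_support_iff.mp h)

lemma mseq_pos : ∀ j, 0 < mseq j := by
  intro j
  induction j using Nat.strong_induction_on with
  | _ j ih =>
    match j with
    | 0 => exact two_pos
    | 1 => exact two_pos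
    | (j+2) =>
      rw [mseq]
      exact pow_pos (ih (j+1) (by omega)) 3

lemma schreierM_empty : ∀ n, (∅ : Finset ℕ) ∈ SchreierM n := by
  intro n
  match n with
  | 0 => simp [SchreierM]
  | 1 =>
    show ∀ k ∈ (∅ : Finset ℕ), _ ≤ k
    simp
  | (n+2) =>
    refine ⟨0, Fin.elim0, (fun i => i.elim0), (fun i => i.elim0), (fun i => i.elim0), ?_, ?_⟩
    · have : (Finset.univ.image fun i : Fin 0 => finMin (Fin.elim0 i)) = ∅ := by simp
      rw [this]
      intro k hk
      simp at hk
    · simp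


lemma DW_zero (N1 N2 : Set ℕ) (σ : List (Finset ℕ × ℕ) → ℕ) (j : ℕ) :
    DW N1 N2 σ 0 (mseq (2 * j)) := by
  have h := DW.even (N1 := N1) (N2 := N2) (σ := σ) j 0 Fin.elim0 Fin.elim0 Fin.elim0
    (fun i => i.elim0) (fun i => i.elim0)
    (by
      have : (Finset.univ.image fun i : Fin 0 => minsupp (Fin.elim0 i)) = ∅ := by simp
      rw [this]; exact schreierM_empty _)
    (by simp)
  simpa using h

lemma DW_neg {N1 N2 : Set ℕ} {σ : List (Finset ℕ × ℕ) → ℕ} {f : ℕ →₀ ℝ} {w : ℕ}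
    (h : DW N1 N2 σ f w) : DW N1 N2 σ (-f) w := by
  induction h with
  | pos k =>
    have := DW.neg (N1 := N1) (N2 := N2) (σ := σ) k
    have he : (Finsupp.single k (-1) : ℕ →₀ ℝ) = -(Finsupp.single k 1) := by
      simp [Finsupp.single_neg]
    rwa [he] at this
  | neg k =>
    have := DW.pos (N1 := N1) (N2 := N2) (σ := σ) k
    have he : -(Finsupp.single k (-1) : ℕ →₀ ℝ) = Finsupp.single k 1 := by
      simp [Finsupp.single_neg]
    rwa [← he] at this
  | even j p f w lam hmem hdisj hallow hlam ih =>
    have h2 := DW.even (N1 := N1) (N2 := N2) (σ := σ) j p f w (fun i => -lam i)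
      hmem hdisj hallow (by simpa using hlam)
    have he : (((mseq (2 * j) : ℕ) : ℝ))⁻¹ • ∑ i, (-lam i) • f i
        = -((((mseq (2 * j) : ℕ) : ℝ))⁻¹ • ∑ i, lam i • f i) := by
      rw [← smul_neg, ← Finset.sum_neg_distrib]
      congr 1
      exact Finset.sum_congr rfl (fun i _ => by rw [neg_smul])
    rwa [he] at h2
  | odd j p f E js lam hmem hsupp hspec hallow hbig hlam ih =>
    have h2 := DW.odd (N1 := N1) (N2 := N2) (σ := σ) j p f E js (fun i => -lam i)
      hmem hsupp hspec hallow hbig (by simpa using hlam)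
    have he : (((mseq (2 * j + 1) : ℕ) : ℝ))⁻¹ • ∑ i, (-lam i) • f i
        = -((((mseq (2 * j + 1) : ℕ) : ℝ))⁻¹ • ∑ i, lam i • f i) := by
      rw [← smul_neg, ← Finset.sum_neg_distrib]
      congr 1
      exact Finset.sum_congr rfl (fun i _ => by rw [neg_smul])
    rwa [he] at h2

lemma InSigma_E_disjoint {N1 N2 : Set ℕ} {σ : List (Finset ℕ × ℕ) → ℕ} {p : ℕ}
    {E : Fin p → Finset ℕ} {js : Fin p → ℕ}
    (hspec : IsSpecial N1 N2 σ (List.ofFn fun i => (E i, js i))) :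
    ∀ i i' : Fin p, i ≠ i' → Disjoint (E i) (E i') := by
  have hp := hspec.1.2.1
  rw [List.pairwise_ofFn] at hp
  intro i i' hne
  rcases lt_or_gt_of_ne hne with h | h
  · exact hp h
  · exact (hp h).symm

lemma lam_abs_le_one {p : ℕ} (lam : Fin p → ℝ) (hlam : (∑ i, (lam i) ^ 2) ≤ 1)
    (i : Fin p) : |lam i| ≤ 1 := by
  have h1 : lam i ^ 2 ≤ 1 := by
    refine le_trans ?_ hlam
    exact Finset.single_le_sum (f := fun i => lam i ^ 2)
      (fun i _ => sq_nonneg _) (Finset.mem_univ i)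
  nlinarith [abs_nonneg (lam i), sq_abs (lam i)]

/-- Every functional in `D_wh` has coordinates bounded by 1. -/
lemma DW_bd {N1 N2 : Set ℕ} {σ : List (Finset ℕ × ℕ) → ℕ} {f : ℕ →₀ ℝ} {w : ℕ}
    (h : DW N1 N2 σ f w) : ∀ n, |f n| ≤ 1 := by
  induction h with
  | pos k =>
    intro n
    rw [Finsupp.single_apply]
    split <;> norm_num
  | neg k =>
    intro n
    rw [Finsupp.single_apply]
    split <;> norm_num
  | even j p f w lam hmem hdisj hallow hlam ih =>
    intro n
    have hm : (1 : ℝ) ≤ ((mseq (2 * j) : ℕ) : ℝ) := by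
      exact_mod_cast mseq_pos (2 * j)
    have hval : ((((mseq (2 * j) : ℕ) : ℝ))⁻¹ • ∑ i, lam i • f i) n
        = (((mseq (2 * j) : ℕ) : ℝ))⁻¹ * ∑ i, lam i * f i n := by
      rw [Finsupp.smul_apply, smul_eq_mul]
      congr 1
      rw [Finsupp.finset_sum_apply]
      exact Finset.sum_congr rfl (fun i _ => by rw [Finsupp.smul_apply, smul_eq_mul])
    rw [hval, abs_mul, abs_inv, abs_of_pos (by linarith)]
    have hsum : |∑ i, lam i * f i n| ≤ 1 := by
      by_cases hex : ∃ i0, f i0 n ≠ 0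
      · obtain ⟨i0, hi0⟩ := hex
        have heq : ∑ i, lam i * f i n = lam i0 * f i0 n := by
          refine Finset.sum_eq_single i0 (fun i _ hne => ?_) (by simp)
          have hd := hdisj i i0 hne
          by_contra hc
          have h1 : n ∈ (f i).support := Finsupp.mem_support_iff.mpr
            (fun h0 => hc (by rw [h0, mul_zero]))
          have h2 : n ∈ (f i0).support := Finsupp.mem_support_iff.mpr hi0
          exact (Finset.disjoint_left.mp hd h1) h2
        rw [heq, abs_mul]
        calc |lam i0| * |f i0 n| ≤ 1 * 1 :=
              mul_le_mul (lam_abs_le_one lam hlam i0) (ih i0 n) (abs_nonneg _) zero_le_one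
          _ = 1 := mul_one 1
      · push_neg at hex
        have : ∑ i, lam i * f i n = 0 :=
          Finset.sum_eq_zero (fun i _ => by rw [hex i, mul_zero])
        rw [this]
        simp
    calc (((mseq (2 * j) : ℕ) : ℝ))⁻¹ * |∑ i, lam i * f i n|
        ≤ 1 * 1 := by
          refine mul_le_mul ?_ hsum (abs_nonneg _) zero_le_one
          exact inv_le_one_of_one_le₀ hm
      _ = 1 := mul_one 1
  | odd j p f E js lam hmem hsupp hspec hallow hbig hlam ih =>
    intro n
    have hdisj : ∀ i i', i ≠ i' → Disjoint (f i).support (f i').support := by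
      intro i i' hne
      exact Finset.disjoint_of_subset_left (hsupp i)
        (Finset.disjoint_of_subset_right (hsupp i') (InSigma_E_disjoint hspec i i' hne))
    have hm : (1 : ℝ) ≤ ((mseq (2 * j + 1) : ℕ) : ℝ) := by
      exact_mod_cast mseq_pos (2 * j + 1)
    have hval : ((((mseq (2 * j + 1) : ℕ) : ℝ))⁻¹ • ∑ i, lam i • f i) n
        = (((mseq (2 * j + 1) : ℕ) : ℝ))⁻¹ * ∑ i, lam i * f i n := by
      rw [Finsupp.smul_apply, smul_eq_mul]
      congr 1
      rw [Finsupp.finset_sum_apply]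
      exact Finset.sum_congr rfl (fun i _ => by rw [Finsupp.smul_apply, smul_eq_mul])
    rw [hval, abs_mul, abs_inv, abs_of_pos (by linarith)]
    have hsum : |∑ i, lam i * f i n| ≤ 1 := by
      by_cases hex : ∃ i0, f i0 n ≠ 0
      · obtain ⟨i0, hi0⟩ := hex
        have heq : ∑ i, lam i * f i n = lam i0 * f i0 n := by
          refine Finset.sum_eq_single i0 (fun i _ hne => ?_) (by simp)
          have hd := hdisj i i0 hne
          by_contra hc
          have h1 : n ∈ (f i).support := Finsupp.mem_support_iff.mpr
            (fun h0 => hc (by rw [h0, mul_zero]))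
          have h2 : n ∈ (f i0).support := Finsupp.mem_support_iff.mpr hi0
          exact (Finset.disjoint_left.mp hd h1) h2
        rw [heq, abs_mul]
        calc |lam i0| * |f i0 n| ≤ 1 * 1 :=
              mul_le_mul (lam_abs_le_one lam hlam i0) (ih i0 n) (abs_nonneg _) zero_le_one
          _ = 1 := mul_one 1
      · push_neg at hex
        have : ∑ i, lam i * f i n = 0 :=
          Finset.sum_eq_zero (fun i _ => by rw [hex i, mul_zero])
        rw [this]
        simp
    calc (((mseq (2 * j + 1) : ℕ) : ℝ))⁻¹ * |∑ i, lam i * f i n|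
        ≤ 1 * 1 := by
          refine mul_le_mul ?_ hsum (abs_nonneg _) zero_le_one
          exact inv_le_one_of_one_le₀ hm
      _ = 1 := mul_one 1


lemma image_equivFin {ι α : Type*} [DecidableEq ι] [DecidableEq α] (s : Finset ι) (g : ι → α) :
    (Finset.univ.image fun j' : Fin s.card => g ((s.equivFin.symm j') : ι)) = s.image g := by
  ext m
  simp only [Finset.mem_image, Finset.mem_univ, true_and]
  constructor
  · rintro ⟨j', rfl⟩
    exact ⟨(s.equivFin.symm j' : ι), (s.equivFin.symm j').2, rfl⟩
  · rintro ⟨i, hi, rfl⟩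
    exact ⟨s.equivFin ⟨i, hi⟩, by simp⟩

lemma sum_equivFin {ι M : Type*} [DecidableEq ι] [AddCommMonoid M] (s : Finset ι) (g : ι → M) :
    ∑ j' : Fin s.card, g ((s.equivFin.symm j') : ι) = ∑ i ∈ s, g i := by
  rw [← Finset.sum_coe_sort s g]
  exact Equiv.sum_comp s.equivFin.symm (fun x => g (x : ι))

/-- The modified Schreier families are hereditary and spreading: if the `a i` are distinct
elements of `M ∈ S^M_n` and `b` is injective with `a i ≤ b i` on `t`, then the image of `b`
is in `S^M_n`. -/
lemma schreierM_spread : ∀ (n : ℕ) {ι : Type} [DecidableEq ι] (t : Finset ι) (a b : ι → ℕ)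
    (_ : Set.InjOn a t) (_ : Set.InjOn b t) (_ : ∀ i ∈ t, a i ≤ b i)
    (M : Finset ℕ) (_ : ∀ i ∈ t, a i ∈ M) (_ : M ∈ SchreierM n),
    t.image b ∈ SchreierM n := by
  intro n
  induction n using Nat.strong_induction_on with
  | _ n ih =>
    intro ι _ t a b hainj hbinj hab M haM hM
    have hcard : t.card ≤ M.card := by
      rw [← Finset.card_image_of_injOn hainj]
      exact Finset.card_le_card (fun m hm => by
        obtain ⟨i, hi, rfl⟩ := Finset.mem_image.mp hm
        exact haM i hi)
    match n with
    | 0 =>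
      show (t.image b).card ≤ 1
      calc (t.image b).card = t.card := Finset.card_image_of_injOn hbinj
        _ ≤ M.card := hcard
        _ ≤ 1 := hM
    | 1 =>
      intro β hβ
      obtain ⟨i, hi, rfl⟩ := Finset.mem_image.mp hβ
      calc (t.image b).card = t.card := Finset.card_image_of_injOn hbinj
        _ ≤ M.card := hcard
        _ ≤ a i := hM (a i) (haM i hi)
        _ ≤ b i := hab i hi
    | (q+2) =>
      obtain ⟨dd, F, hFQ, hFne, hFdisj, hFmin, hFU⟩ := hM
      classical
      set tj : Fin dd → Finset ι := fun j => t.filter (fun i => a i ∈ F j) with htj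
      set S : Finset (Fin dd) := Finset.univ.filter (fun j => (tj j).Nonempty) with hSdef
      set e := S.equivFin.symm with he
      -- minima of the F j are distinct, so dd ≤ finMin (F j)
      have hFmininj : Function.Injective (fun j => finMin (F j)) := by
        intro j j' hjj'
        by_contra hne
        have hjj2 : finMin (F j) = finMin (F j') := hjj'
        have h1 : finMin (F j) ∈ F j := finMin_mem (hFne j)
        have h2 : finMin (F j') ∈ F j' := finMin_mem (hFne j')
        rw [hjj2] at h1
        exact (Finset.disjoint_left.mp (hFdisj j j' hne) h1) h2
      have hddle : ∀ j : Fin dd, dd ≤ finMin (F j) := by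
        intro j
        have hc : (Finset.univ.image fun j => finMin (F j)).card = dd := by
          rw [Finset.card_image_of_injective _ hFmininj, Finset.card_univ, Fintype.card_fin]
        have := hFmin (finMin (F j)) (Finset.mem_image.mpr ⟨j, Finset.mem_univ j, rfl⟩)
        rwa [hc] at this
      refine ⟨S.card, fun j' => (tj ((e j') : Fin dd)).image b, ?_, ?_, ?_, ?_, ?_⟩
      · -- each piece is in SchreierM (q+1)
        intro j'
        refine ih (q+1) (by omega) _ a b (hainj.mono ?_) (hbinj.mono ?_)
          (fun i hi => hab i (Finset.mem_filter.mp hi).1) (F (e j'))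
          (fun i hi => (Finset.mem_filter.mp hi).2) (hFQ _)
        · intro i hi
          exact (Finset.mem_filter.mp hi).1
        · intro i hi
          exact (Finset.mem_filter.mp hi).1
      · -- nonempty
        intro j'
        exact ((Finset.mem_filter.mp (e j').2).2).image b
      · -- pairwise disjoint
        intro j' j'' hne
        rw [Finset.disjoint_left]
        rintro β hβ1 hβ2
        obtain ⟨i1, hi1, hb1⟩ := Finset.mem_image.mp hβ1
        obtain ⟨i2, hi2, hb2⟩ := Finset.mem_image.mp hβ2
        have hieq : i1 = i2 := hbinj (Finset.mem_filter.mp hi1).1 (Finset.mem_filter.mp hi2).1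
          (by rw [hb1, hb2])
        have ha1 : a i1 ∈ F (e j') := (Finset.mem_filter.mp hi1).2
        have ha2 : a i1 ∈ F (e j'') := hieq ▸ (Finset.mem_filter.mp hi2).2
        have hFeq : ((e j') : Fin dd) = ((e j'') : Fin dd) := by
          by_contra hc
          exact (Finset.disjoint_left.mp (hFdisj _ _ hc) ha1) ha2
        exact hne (by
          have : e j' = e j'' := Subtype.ext hFeq
          exact e.injective this)
      · -- the minima form a Schreier-one set
        intro β hβ
        obtain ⟨j', _, rfl⟩ := Finset.mem_image.mp hβ
        have hne : ((tj ((e j') : Fin dd)).image b).Nonempty :=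
          ((Finset.mem_filter.mp (e j').2).2).image b
        obtain ⟨i, hi, hbi⟩ := Finset.mem_image.mp (finMin_mem hne)
        calc (Finset.univ.image fun j' : Fin S.card =>
                finMin ((tj ((e j') : Fin dd)).image b)).card
            ≤ S.card := le_trans Finset.card_image_le (by simp)
          _ ≤ dd := le_trans (Finset.card_filter_le _ _) (le_of_eq (by simp))
          _ ≤ finMin (F (e j')) := hddle _
          _ ≤ a i := finMin_le (Finset.mem_filter.mp hi).2
          _ ≤ b i := hab i (Finset.mem_filter.mp hi).1
          _ = finMin ((tj ((e j') : Fin dd)).image b) := hbi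
      · -- union
        ext β
        simp only [Finset.mem_biUnion, Finset.mem_univ, true_and, Finset.mem_image]
        constructor
        · rintro ⟨i, hi, rfl⟩
          have haiM : a i ∈ M := haM i hi
          rw [hFU] at haiM
          obtain ⟨j, _, hj⟩ := Finset.mem_biUnion.mp haiM
          have hjS : j ∈ S := by
            rw [hSdef, Finset.mem_filter]
            exact ⟨Finset.mem_univ j, ⟨i, Finset.mem_filter.mpr ⟨hi, hj⟩⟩⟩
          refine ⟨S.equivFin ⟨j, hjS⟩, ⟨i, ?_, rfl⟩⟩
          rw [he]
          simp only [Equiv.symm_apply_apply]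
          exact Finset.mem_filter.mpr ⟨hi, hj⟩
        · rintro ⟨j', ⟨i, hi, rfl⟩⟩
          exact ⟨i, (Finset.mem_filter.mp hi).1, rfl⟩


/-- The inductive statement: `f` admits a disjoint `ℓ_2`-splitting (of the same weight)
with respect to any disjointly supported family. -/
def GoodF (N1 N2 : Set ℕ) (σ : List (Finset ℕ × ℕ) → ℕ) (f : ℕ →₀ ℝ) (w : ℕ) : Prop :=
  ∀ (d : ℕ) (x : Fin d → ℕ →₀ ℝ),
    (∀ k k', k ≠ k' → Disjoint (x k).support (x k').support) →
    ∃ g : Fin d → ℕ →₀ ℝ,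
      (∀ k, DW N1 N2 σ (g k) w ∨ g k = 0) ∧
      (∀ k k', k ≠ k' → Disjoint (g k).support (g k').support) ∧
      (∀ k, (g k).support ⊆ f.support) ∧
      (∀ k, 0 ≤ dotp (g k) (x k)) ∧
      dotp f (∑ k, x k) ≤ Real.sqrt (∑ k, (dotp (g k) (x k)) ^ 2)

lemma goodF_neg {N1 N2 : Set ℕ} {σ : List (Finset ℕ × ℕ) → ℕ} {f : ℕ →₀ ℝ} {w : ℕ}
    (h : GoodF N1 N2 σ f w) : GoodF N1 N2 σ (-f) w := by
  intro d x hx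
  obtain ⟨g, hg1, hg2, hg3, hg4, hg5⟩ := h d (fun k => -(x k))
    (fun k k' hkk => by simpa using hx k k' hkk)
  refine ⟨fun k => -(g k), ?_, ?_, ?_, ?_, ?_⟩
  · intro k
    rcases hg1 k with h | h
    · exact Or.inl (DW_neg h)
    · exact Or.inr (by show -g k = 0; rw [h, neg_zero])
  · intro k k' h
    simpa using hg2 k k' h
  · intro k
    simpa using hg3 k
  · intro k
    rw [dotp_neg, ← dotp_neg_right]
    exact hg4 k
  · have h0 : ∑ k, -(x k) = -(∑ k, x k) := by rw [Finset.sum_neg_distrib]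
    have h1 : dotp (-f) (∑ k, x k) = dotp f (∑ k, -(x k)) := by
      rw [dotp_neg, h0, dotp_neg_right]
    rw [h1]
    refine hg5.trans (le_of_eq ?_)
    congr 1
    refine Finset.sum_congr rfl (fun k _ => ?_)
    rw [dotp_neg, dotp_neg_right]

lemma good_single (N1 N2 : Set ℕ) (σ : List (Finset ℕ × ℕ) → ℕ) (n : ℕ) :
    GoodF N1 N2 σ (Finsupp.single n 1) 0 := by
  classical
  intro d x hx
  set g : Fin d → ℕ →₀ ℝ := fun k =>
    if x k n = 0 then 0 else if 0 < x k n then Finsupp.single n 1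
      else Finsupp.single n (-1) with hgdef
  have hval : ∀ k, dotp (g k) (x k) = |x k n| := by
    intro k
    rw [hgdef]
    dsimp only
    by_cases h0 : x k n = 0
    · simp [h0, dotp_zero]
    · rw [if_neg h0]
      by_cases h1 : 0 < x k n
      · rw [if_pos h1, dotp_single, one_mul, abs_of_pos h1]
      · rw [if_neg h1, dotp_single, abs_of_neg (lt_of_le_of_ne (not_lt.mp h1) h0)]
        ring
  have hsupp : ∀ k, (g k).support ⊆ {n} := by
    intro k
    rw [hgdef]
    dsimp only
    split
    · simp
    · split <;> exact Finsupp.support_single_subset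
  refine ⟨g, ?_, ?_, ?_, ?_, ?_⟩
  · intro k
    rw [hgdef]
    dsimp only
    split
    · exact Or.inr rfl
    · split
      · exact Or.inl (DW.pos n)
      · exact Or.inl (DW.neg n)
  · intro k k' hkk
    by_cases h0 : x k n = 0
    · have hz : g k = 0 := by rw [hgdef]; dsimp only; rw [if_pos h0]
      rw [hz]
      simp
    · by_cases h0' : x k' n = 0
      · have hz : g k' = 0 := by rw [hgdef]; dsimp only; rw [if_pos h0']
        rw [hz]
        simp
      · exact absurd (Finsupp.mem_support_iff.mpr h0')
          (Finset.disjoint_left.mp (hx k k' hkk) (Finsupp.mem_support_iff.mpr h0))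
  · intro k
    refine (hsupp k).trans ?_
    rw [Finsupp.support_single_ne_zero n one_ne_zero]
  · intro k
    rw [hval k]
    exact abs_nonneg _
  · rw [dotp_single, one_mul]
    by_cases hex : ∃ k0, x k0 n ≠ 0
    · obtain ⟨k0, hk0⟩ := hex
      have hz : ∀ k, k ≠ k0 → x k n = 0 := by
        intro k hk
        by_contra hc
        exact (Finset.disjoint_left.mp (hx k k0 hk)
          (Finsupp.mem_support_iff.mpr hc)) (Finsupp.mem_support_iff.mpr hk0)
      have h1 : (∑ k, x k) n = x k0 n := by
        rw [Finsupp.finset_sum_apply]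
        exact Finset.sum_eq_single k0 (fun k _ hk => hz k hk) (by simp)
      have h2 : ∑ k, (dotp (g k) (x k)) ^ 2 = (x k0 n) ^ 2 := by
        rw [show (x k0 n) ^ 2 = dotp (g k0) (x k0) ^ 2 by rw [hval k0, sq_abs]]
        refine Finset.sum_eq_single k0 (fun k _ hk => ?_) (by simp)
        show dotp (g k) (x k) ^ 2 = 0
        rw [hval k, hz k hk]
        simp
      rw [h1, h2, Real.sqrt_sq_eq_abs]
      exact le_abs_self _
    · push_neg at hex
      have h1 : (∑ k, x k) n = 0 := by
        rw [Finsupp.finset_sum_apply]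
        exact Finset.sum_eq_zero (fun k _ => hex k)
      rw [h1]
      exact Real.sqrt_nonneg _

lemma cs_step {p : ℕ} (lam s : Fin p → ℝ) (hs : ∀ i, 0 ≤ s i) (hl0 : ∀ i, 0 ≤ lam i)
    (hl : ∑ i, lam i ^ 2 ≤ 1) : ∑ i, lam i * s i ≤ Real.sqrt (∑ i, s i ^ 2) := by
  have h1 : (∑ i, lam i * s i) ^ 2 ≤ (∑ i, lam i ^ 2) * (∑ i, s i ^ 2) :=
    Finset.sum_mul_sq_le_sq_mul_sq _ _ _
  have h2 : (∑ i, lam i * s i) ^ 2 ≤ ∑ i, s i ^ 2 :=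
    le_trans h1 (mul_le_of_le_one_left (Finset.sum_nonneg fun i _ => sq_nonneg _) hl)
  calc ∑ i, lam i * s i ≤ |∑ i, lam i * s i| := le_abs_self _
    _ = Real.sqrt ((∑ i, lam i * s i) ^ 2) := (Real.sqrt_sq_eq_abs _).symm
    _ ≤ Real.sqrt (∑ i, s i ^ 2) := Real.sqrt_le_sqrt h2


/-- Core step: if each `f i` splits, and `D_wh` is closed under the relevant operation
(abstracted as `closure`), then `c • ∑ lam i • f i` splits. -/
lemma good_of_closure (N1 N2 : Set ℕ) (σ : List (Finset ℕ × ℕ) → ℕ) {p : ℕ}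
    (c : ℝ) (hc : 0 < c) (M : ℕ)
    (f : Fin p → ℕ →₀ ℝ) (w : Fin p → ℕ) (lam : Fin p → ℝ)
    (hdisjf : ∀ i i', i ≠ i' → Disjoint (f i).support (f i').support)
    (hlam : ∑ i, lam i ^ 2 ≤ 1)
    (ihg : ∀ i, GoodF N1 N2 σ (f i) (w i))
    (closure : ∀ (h : Fin p → ℕ →₀ ℝ) (μ : Fin p → ℝ),
      (∀ i, DW N1 N2 σ (h i) (w i) ∨ h i = 0) →
      (∀ i, (h i).support ⊆ (f i).support) →
      (∑ i, μ i ^ 2 ≤ 1) →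
      DW N1 N2 σ (c • ∑ i, μ i • h i) M) :
    GoodF N1 N2 σ (c • ∑ i, lam i • f i) M := by
  classical
  intro d x hx
  set lam' : Fin p → ℝ := fun i => |lam i| with hlam'def
  set f' : Fin p → ℕ →₀ ℝ := fun i => if lam i < 0 then -(f i) else f i with hf'def
  have hterm : ∀ i, lam i • f i = lam' i • f' i := by
    intro i
    rw [hlam'def, hf'def]
    dsimp only
    by_cases h : lam i < 0
    · rw [if_pos h, abs_of_neg h, smul_neg, neg_smul, neg_neg]
    · rw [if_neg h, abs_of_nonneg (not_lt.mp h)]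
  have hf'supp : ∀ i, (f' i).support = (f i).support := by
    intro i
    rw [hf'def]
    dsimp only
    split
    · exact Finsupp.support_neg _
    · rfl
  have hf'good : ∀ i, GoodF N1 N2 σ (f' i) (w i) := by
    intro i
    rw [hf'def]
    dsimp only
    split
    · exact goodF_neg (ihg i)
    · exact ihg i
  choose G hG1 hG2 hG3 hG4 hG5 using fun i => hf'good i d x hx
  set G' : Fin p → Fin d → ℕ →₀ ℝ := fun i k => if lam i = 0 then 0 else G i k with hG'def
  have hG'supp : ∀ i k, (G' i k).support ⊆ (f i).support := by
    intro i k
    rw [hG'def]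
    dsimp only
    split
    · simp
    · exact hf'supp i ▸ hG3 i k
  have hG'dw : ∀ i k, DW N1 N2 σ (G' i k) (w i) ∨ G' i k = 0 := by
    intro i k
    rw [hG'def]
    dsimp only
    split
    · exact Or.inr rfl
    · exact hG1 i k
  have hG'disj : ∀ i k k', k ≠ k' → Disjoint (G' i k).support (G' i k').support := by
    intro i k k' h
    rw [hG'def]
    dsimp only
    split
    · simp
    · exact hG2 i k k' h
  set t : Fin p → Fin d → ℝ := fun i k => dotp (G' i k) (x k) with htdef
  have ht0 : ∀ i k, 0 ≤ t i k := by
    intro i k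
    rw [htdef]
    dsimp only
    rw [hG'def]
    dsimp only
    split
    · rw [dotp_zero]
    · exact hG4 i k
  set T : Fin d → ℝ := fun k => Real.sqrt (∑ i, t i k ^ 2) with hTdef
  have hT0 : ∀ k, 0 ≤ T k := fun k => Real.sqrt_nonneg _
  have hTsq : ∀ k, T k ^ 2 = ∑ i, t i k ^ 2 := fun k =>
    Real.sq_sqrt (Finset.sum_nonneg fun i _ => sq_nonneg _)
  set μ : Fin p → Fin d → ℝ := fun i k => if T k = 0 then 0 else t i k / T k with hμdef
  have hμsq : ∀ k, ∑ i, μ i k ^ 2 ≤ 1 := by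
    intro k
    rw [hμdef]
    dsimp only
    by_cases h : T k = 0
    · simp [h]
    · simp only [if_neg h]
      have he : ∑ i, (t i k / T k) ^ 2 = (∑ i, t i k ^ 2) / T k ^ 2 := by
        rw [Finset.sum_div]
        exact Finset.sum_congr rfl (fun i _ => div_pow _ _ _)
      rw [he, ← hTsq k, div_self (pow_ne_zero 2 h)]
  have hμt : ∀ k, ∑ i, μ i k * t i k = T k := by
    intro k
    rw [hμdef]
    dsimp only
    by_cases h : T k = 0
    · simp only [if_pos h, zero_mul, Finset.sum_const_zero]
      exact h.symm
    · simp only [if_neg h]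
      have he : ∑ i, t i k / T k * t i k = (∑ i, t i k ^ 2) / T k := by
        rw [Finset.sum_div]
        refine Finset.sum_congr rfl (fun i _ => ?_)
        rw [div_mul_eq_mul_div, sq]
      rw [he, ← hTsq k, sq, mul_div_assoc, div_self h, mul_one]
  set g : Fin d → ℕ →₀ ℝ := fun k => c • ∑ i, μ i k • G' i k with hgdef
  have hgdw : ∀ k, DW N1 N2 σ (g k) M := fun k =>
    closure (fun i => G' i k) (fun i => μ i k) (fun i => hG'dw i k)
      (fun i => hG'supp i k) (hμsq k)
  have hgdot : ∀ k, dotp (g k) (x k) = c * T k := by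
    intro k
    rw [hgdef]
    dsimp only
    rw [dotp_smul, dotp_sum_left]
    congr 1
    rw [← hμt k]
    refine Finset.sum_congr rfl (fun i _ => ?_)
    rw [dotp_smul]
  have hFsupp : ∀ i, lam i ≠ 0 → (f i).support ⊆ (c • ∑ i', lam i' • f i').support := by
    intro i hi n hn
    rw [Finsupp.mem_support_iff, Finsupp.smul_apply, smul_eq_mul]
    have hz : ∀ i' ∈ Finset.univ, i' ≠ i → (lam i' • f i') n = 0 := by
      intro i' _ hne
      have hzz : f i' n = 0 := by
        by_contra hcc
        exact (Finset.disjoint_left.mp (hdisjf i' i hne)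
          (Finsupp.mem_support_iff.mpr hcc)) hn
      rw [Finsupp.smul_apply, smul_eq_mul, hzz, mul_zero]
    have hv : (∑ i', lam i' • f i') n = lam i * f i n := by
      rw [Finsupp.finset_sum_apply]
      calc ∑ i', (lam i' • f i') n = (lam i • f i) n := Finset.sum_eq_single i hz (by simp)
        _ = lam i * f i n := by rw [Finsupp.smul_apply, smul_eq_mul]
    rw [hv]
    exact mul_ne_zero (ne_of_gt hc) (mul_ne_zero hi (Finsupp.mem_support_iff.mp hn))
  have hgsupp : ∀ k, (g k).support ⊆ (c • ∑ i, lam i • f i).support := by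
    intro k n hn
    rw [hgdef] at hn
    dsimp only at hn
    obtain ⟨i, _, h2⟩ := Finset.mem_biUnion.mp
      (Finsupp.support_finset_sum (Finsupp.support_smul hn))
    have h3 : n ∈ (G' i k).support := Finsupp.support_smul h2
    have hlamne : lam i ≠ 0 := by
      intro hzz
      rw [hG'def] at h3
      dsimp only at h3
      rw [if_pos hzz] at h3
      simp at h3
    exact hFsupp i hlamne (hG'supp i k h3)
  have hgdisj : ∀ k k', k ≠ k' → Disjoint (g k).support (g k').support := by
    intro k k' hkk
    rw [Finset.disjoint_left]
    intro n hn hn'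
    rw [hgdef] at hn hn'
    dsimp only at hn hn'
    obtain ⟨i, _, h2⟩ := Finset.mem_biUnion.mp
      (Finsupp.support_finset_sum (Finsupp.support_smul hn))
    obtain ⟨i', _, h2'⟩ := Finset.mem_biUnion.mp
      (Finsupp.support_finset_sum (Finsupp.support_smul hn'))
    have h3 : n ∈ (G' i k).support := Finsupp.support_smul h2
    have h3' : n ∈ (G' i' k').support := Finsupp.support_smul h2'
    by_cases hii : i = i'
    · subst hii
      exact (Finset.disjoint_left.mp (hG'disj i k k' hkk) h3) h3'
    · exact (Finset.disjoint_left.mp (Finset.disjoint_of_subset_left (hG'supp i k)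
        (Finset.disjoint_of_subset_right (hG'supp i' k') (hdisjf i i' hii))) h3) h3'
  have hest : dotp (c • ∑ i, lam i • f i) (∑ k, x k)
      ≤ Real.sqrt (∑ k, (dotp (g k) (x k)) ^ 2) := by
    have hL : dotp (c • ∑ i, lam i • f i) (∑ k, x k)
        = c * ∑ i, lam' i * dotp (f' i) (∑ k, x k) := by
      have hEq : ∑ i, lam i • f i = ∑ i, lam' i • f' i :=
        Finset.sum_congr rfl (fun i _ => hterm i)
      rw [hEq, dotp_smul, dotp_sum_left]
      congr 1
      exact Finset.sum_congr rfl (fun i _ => by rw [dotp_smul])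
    have hper : ∀ i, lam' i * dotp (f' i) (∑ k, x k)
        ≤ lam' i * Real.sqrt (∑ k, t i k ^ 2) := by
      intro i
      by_cases hz : lam i = 0
      · have hz1 : lam' i = 0 := by
          rw [hlam'def]
          dsimp only
          rw [hz, abs_zero]
        rw [hz1, zero_mul, zero_mul]
      · have hG'G : ∀ k, t i k = dotp (G i k) (x k) := by
          intro k
          rw [htdef]
          dsimp only
          rw [hG'def]
          dsimp only
          rw [if_neg hz]
        have hla : 0 ≤ lam' i := by
          rw [hlam'def]
          exact abs_nonneg _
        refine mul_le_mul_of_nonneg_left ((hG5 i).trans (le_of_eq ?_)) hla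
        congr 1
        exact Finset.sum_congr rfl (fun k _ => by rw [hG'G k])
    have hCS : ∑ i, lam' i * Real.sqrt (∑ k, t i k ^ 2)
        ≤ Real.sqrt (∑ i, ∑ k, t i k ^ 2) := by
      have h1 := cs_step lam' (fun i => Real.sqrt (∑ k, t i k ^ 2))
        (fun i => Real.sqrt_nonneg _)
        (fun i => by rw [hlam'def]; exact abs_nonneg _)
        (by rw [hlam'def]; simpa [sq_abs] using hlam)
      refine h1.trans (le_of_eq ?_)
      congr 1
      exact Finset.sum_congr rfl (fun i _ =>
        Real.sq_sqrt (Finset.sum_nonneg fun k _ => sq_nonneg _))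
    have hswap : ∑ i, ∑ k, t i k ^ 2 = ∑ k, T k ^ 2 := by
      rw [Finset.sum_comm]
      exact Finset.sum_congr rfl (fun k _ => (hTsq k).symm)
    have hfinal : c * Real.sqrt (∑ k, T k ^ 2)
        = Real.sqrt (∑ k, (dotp (g k) (x k)) ^ 2) := by
      have h1 : ∑ k, (dotp (g k) (x k)) ^ 2 = c ^ 2 * ∑ k, T k ^ 2 := by
        rw [Finset.mul_sum]
        exact Finset.sum_congr rfl (fun k _ => by rw [hgdot k, mul_pow])
      rw [h1, Real.sqrt_mul (sq_nonneg c), Real.sqrt_sq (le_of_lt hc)]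
    calc dotp (c • ∑ i, lam i • f i) (∑ k, x k)
        = c * ∑ i, lam' i * dotp (f' i) (∑ k, x k) := hL
      _ ≤ c * ∑ i, lam' i * Real.sqrt (∑ k, t i k ^ 2) :=
          mul_le_mul_of_nonneg_left (Finset.sum_le_sum (fun i _ => hper i)) (le_of_lt hc)
      _ ≤ c * Real.sqrt (∑ i, ∑ k, t i k ^ 2) :=
          mul_le_mul_of_nonneg_left hCS (le_of_lt hc)
      _ = c * Real.sqrt (∑ k, T k ^ 2) := by rw [hswap]
      _ = Real.sqrt (∑ k, (dotp (g k) (x k)) ^ 2) := hfinal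
  exact ⟨g, fun k => Or.inl (hgdw k), hgdisj, hgsupp,
    fun k => by rw [hgdot k]; exact mul_nonneg (le_of_lt hc) (hT0 k), hest⟩


lemma good_even (N1 N2 : Set ℕ) (σ : List (Finset ℕ × ℕ) → ℕ) (j p : ℕ)
    (f : Fin p → ℕ →₀ ℝ) (w : Fin p → ℕ) (lam : Fin p → ℝ)
    (hdisj : ∀ i i', i ≠ i' → Disjoint (f i).support (f i').support)
    (hallow : (Finset.univ.image fun i => minsupp (f i)) ∈ SchreierM (nseq (2 * j)))
    (hlam : (∑ i, (lam i) ^ 2) ≤ 1)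
    (ihg : ∀ i, GoodF N1 N2 σ (f i) (w i)) :
    GoodF N1 N2 σ (((mseq (2 * j) : ℕ) : ℝ)⁻¹ • ∑ i, lam i • f i) (mseq (2 * j)) := by
  classical
  have hc : (0 : ℝ) < ((mseq (2 * j) : ℕ) : ℝ)⁻¹ :=
    inv_pos.mpr (by exact_mod_cast mseq_pos (2 * j))
  refine good_of_closure N1 N2 σ _ hc _ f w lam hdisj hlam ihg ?_
  intro h μ hdw hsupp hμ
  set S : Finset (Fin p) := Finset.univ.filter (fun i => h i ≠ 0) with hSdef
  have hmemS : ∀ i' : Fin S.card, h ((S.equivFin.symm i') : Fin p) ≠ 0 := fun i' =>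
    (Finset.mem_filter.mp (S.equivFin.symm i').2).2
  have hcoene : ∀ i' i'' : Fin S.card, i' ≠ i'' →
      ((S.equivFin.symm i') : Fin p) ≠ ((S.equivFin.symm i'') : Fin p) := by
    intro i' i'' hne hcc
    exact hne (S.equivFin.symm.injective (Subtype.ext hcc))
  have hDW := DW.even (N1 := N1) (N2 := N2) (σ := σ) j S.card
    (fun i' => h ((S.equivFin.symm i') : Fin p))
    (fun i' => w ((S.equivFin.symm i') : Fin p))
    (fun i' => μ ((S.equivFin.symm i') : Fin p))
    (fun i' => (hdw _).resolve_right (hmemS i'))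
    (fun i' i'' hne => Finset.disjoint_of_subset_left (hsupp _)
      (Finset.disjoint_of_subset_right (hsupp _) (hdisj _ _ (hcoene i' i'' hne))))
    (by
      rw [image_equivFin S (fun i => minsupp (h i))]
      refine schreierM_spread (nseq (2 * j)) S (fun i => minsupp (f i))
        (fun i => minsupp (h i)) ?_ ?_ ?_
        (Finset.univ.image fun i => minsupp (f i))
        (fun i _ => Finset.mem_image.mpr ⟨i, Finset.mem_univ i, rfl⟩) hallow
      · intro i hi i₂ hi₂ heq
        have hne1 : h i ≠ 0 := (Finset.mem_filter.mp (Finset.mem_coe.mp hi)).2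
        have hne2 : h i₂ ≠ 0 := (Finset.mem_filter.mp (Finset.mem_coe.mp hi₂)).2
        by_contra hcc
        have hm1 : minsupp (f i) ∈ (f i).support := by
          refine minsupp_mem ?_
          intro hz
          have := hsupp i (minsupp_mem hne1)
          rw [hz] at this
          simp at this
        have hm2 : minsupp (f i₂) ∈ (f i₂).support := by
          refine minsupp_mem ?_
          intro hz
          have := hsupp i₂ (minsupp_mem hne2)
          rw [hz] at this
          simp at this
        have heq' : minsupp (f i) = minsupp (f i₂) := heq
        rw [heq'] at hm1
        exact (Finset.disjoint_left.mp (hdisj i i₂ hcc) hm1) hm2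
      · intro i hi i₂ hi₂ heq
        have hne1 : h i ≠ 0 := (Finset.mem_filter.mp (Finset.mem_coe.mp hi)).2
        have hne2 : h i₂ ≠ 0 := (Finset.mem_filter.mp (Finset.mem_coe.mp hi₂)).2
        by_contra hcc
        have hm1 : minsupp (h i) ∈ (f i).support := hsupp i (minsupp_mem hne1)
        have hm2 : minsupp (h i₂) ∈ (f i₂).support := hsupp i₂ (minsupp_mem hne2)
        have heq' : minsupp (h i) = minsupp (h i₂) := heq
        rw [heq'] at hm1
        exact (Finset.disjoint_left.mp (hdisj i i₂ hcc) hm1) hm2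
      · intro i hi
        have hne1 : h i ≠ 0 := (Finset.mem_filter.mp hi).2
        exact minsupp_le (hsupp i (minsupp_mem hne1)))
    (by
      have he : ∑ i' : Fin S.card, (μ ((S.equivFin.symm i') : Fin p)) ^ 2
          = ∑ i ∈ S, μ i ^ 2 := sum_equivFin S (fun i => μ i ^ 2)
      rw [he]
      refine le_trans (Finset.sum_le_sum_of_subset_of_nonneg (Finset.subset_univ S)
        (fun i _ _ => sq_nonneg _)) hμ)
  have hEq : ∑ i' : Fin S.card, μ ((S.equivFin.symm i') : Fin p)
        • h ((S.equivFin.symm i') : Fin p) = ∑ i, μ i • h i := by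
    rw [sum_equivFin S (fun i => μ i • h i)]
    refine Finset.sum_subset (Finset.subset_univ S) (fun i _ hnot => ?_)
    have : h i = 0 := by
      by_contra hcc
      exact hnot (Finset.mem_filter.mpr ⟨Finset.mem_univ i, hcc⟩)
    rw [this, smul_zero]
  rwa [hEq] at hDW

lemma good_odd (N1 N2 : Set ℕ) (σ : List (Finset ℕ × ℕ) → ℕ) (j p : ℕ)
    (f : Fin p → ℕ →₀ ℝ) (E : Fin p → Finset ℕ) (js : Fin p → ℕ) (lam : Fin p → ℝ)
    (hsupp : ∀ i, (f i).support ⊆ E i)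
    (hspec : IsSpecial N1 N2 σ (List.ofFn fun i => (E i, js i)))
    (hallow : (Finset.univ.image fun i => finMin (E i)) ∈ SchreierM (nseq (2 * j + 1)))
    (hbig : ∀ i, 2 * j + 2 < 2 * js i)
    (hlam : (∑ i, (lam i) ^ 2) ≤ 1)
    (ihg : ∀ i, GoodF N1 N2 σ (f i) (mseq (2 * js i))) :
    GoodF N1 N2 σ (((mseq (2 * j + 1) : ℕ) : ℝ)⁻¹ • ∑ i, lam i • f i)
      (mseq (2 * j + 1)) := by
  have hc : (0 : ℝ) < ((mseq (2 * j + 1) : ℕ) : ℝ)⁻¹ :=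
    inv_pos.mpr (by exact_mod_cast mseq_pos (2 * j + 1))
  have hdisjf : ∀ i i', i ≠ i' → Disjoint (f i).support (f i').support := by
    intro i i' hne
    exact Finset.disjoint_of_subset_left (hsupp i)
      (Finset.disjoint_of_subset_right (hsupp i') (InSigma_E_disjoint hspec i i' hne))
  refine good_of_closure N1 N2 σ _ hc _ f (fun i => mseq (2 * js i)) lam hdisjf hlam ihg ?_
  intro h μ hdw hsupph hμ
  refine DW.odd j p h E js μ ?_ ?_ hspec hallow hbig hμ
  · intro i
    rcases hdw i with hh | hh
    · exact hh
    · rw [hh]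
      exact DW_zero N1 N2 σ (js i)
  · intro i
    exact (hsupph i).trans (hsupp i)

/-- Main induction: every element of the norming set splits. -/
lemma DW_good {N1 N2 : Set ℕ} {σ : List (Finset ℕ × ℕ) → ℕ} {f : ℕ →₀ ℝ} {w : ℕ}
    (h : DW N1 N2 σ f w) : GoodF N1 N2 σ f w := by
  induction h with
  | pos k => exact good_single N1 N2 σ k
  | neg k =>
    have h1 := goodF_neg (good_single N1 N2 σ k)
    have h2 : (Finsupp.single k (-1) : ℕ →₀ ℝ) = -(Finsupp.single k 1) := by
      simp [Finsupp.single_neg]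
    rwa [h2]
  | even j p f w lam hmem hdisj hallow hlam ih =>
    exact good_even N1 N2 σ j p f w lam hdisj hallow hlam ih
  | odd j p f E js lam hmem hsupp hspec hallow hbig hlam ih =>
    exact good_odd N1 N2 σ j p f E js lam hsupp hspec hallow hbig hlam ih


lemma DWh_dotp_le (N1 N2 : Set ℕ) (σ : List (Finset ℕ × ℕ) → ℕ) (h x : ℕ →₀ ℝ)
    (hh : DWh N1 N2 σ h) : |dotp h x| ≤ ∑ n ∈ x.support, |x n| := by
  obtain ⟨w, hw⟩ := hh
  have hbd := DW_bd hw
  rw [dotp_eq_sum h x (h.support ∪ x.support) Finset.subset_union_left]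
  refine (Finset.abs_sum_le_sum_abs _ _).trans ?_
  have h1 : ∑ n ∈ h.support ∪ x.support, |h n * x n|
      ≤ ∑ n ∈ h.support ∪ x.support, |x n| := by
    refine Finset.sum_le_sum (fun n _ => ?_)
    rw [abs_mul]
    exact mul_le_of_le_one_left (abs_nonneg _) (hbd n)
  refine h1.trans (le_of_eq ?_)
  refine (Finset.sum_subset Finset.subset_union_right (fun n _ hn => ?_)).symm
  rw [Finsupp.notMem_support_iff.mp hn, abs_zero]

lemma wnorm_bdd (N1 N2 : Set ℕ) (σ : List (Finset ℕ × ℕ) → ℕ) (x : ℕ →₀ ℝ) :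
    BddAbove {r | ∃ f, DWh N1 N2 σ f ∧ r = dotp f x} := by
  refine ⟨∑ n ∈ x.support, |x n|, ?_⟩
  rintro r ⟨h, hh, rfl⟩
  exact le_trans (le_abs_self _) (DWh_dotp_le N1 N2 σ h x hh)

lemma DWh_zero (N1 N2 : Set ℕ) (σ : List (Finset ℕ × ℕ) → ℕ) : DWh N1 N2 σ 0 :=
  ⟨mseq (2 * 0), DW_zero N1 N2 σ 0⟩

lemma wnorm_nonneg (N1 N2 : Set ℕ) (σ : List (Finset ℕ × ℕ) → ℕ) (x : ℕ →₀ ℝ) :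
    0 ≤ wnorm N1 N2 σ x :=
  le_csSup (wnorm_bdd N1 N2 σ x) ⟨0, DWh_zero N1 N2 σ, (dotp_zero x).symm⟩

lemma dotp_le_wnorm (N1 N2 : Set ℕ) (σ : List (Finset ℕ × ℕ) → ℕ) {g : ℕ →₀ ℝ}
    (x : ℕ →₀ ℝ) (hg : DWh N1 N2 σ g) : dotp g x ≤ wnorm N1 N2 σ x :=
  le_csSup (wnorm_bdd N1 N2 σ x) ⟨g, hg, rfl⟩

end Aux

/-- Let `f ∈ D_wh` and `(x_k)_{k=1}^d` be disjointly supported vectors.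
There is a disjointly supported sequence `(g_k)_{k=1}^d ⊆ D_wh` with `supp g_k ⊆ supp f`
such that `f(∑ x_k) ≤ (∑ |g_k(x_k)|^2)^{1/2}`.  Consequently
`‖∑ x_k‖ ≤ (∑ ‖x_k‖^2)^{1/2}` for disjointly supported vectors. -/
theorem upper_ell2_estimate (N1 N2 : Set ℕ) (σ : List (Finset ℕ × ℕ) → ℕ)
    (hN : N1 ∪ N2 = Set.univ) (hN1 : N1.Infinite) (hN2 : N2.Infinite)
    (hσ : GoodCoding N1 N2 σ)
    (f : ℕ →₀ ℝ) (hf : DWh N1 N2 σ f)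
    (d : ℕ) (x : Fin d → ℕ →₀ ℝ)
    (hx : ∀ k k', k ≠ k' → Disjoint (x k).support (x k').support) :
    (∃ g : Fin d → ℕ →₀ ℝ,
      (∀ k, DWh N1 N2 σ (g k)) ∧
      (∀ k k', k ≠ k' → Disjoint (g k).support (g k').support) ∧
      (∀ k, (g k).support ⊆ f.support) ∧
      dotp f (∑ k, x k) ≤ Real.sqrt (∑ k, (dotp (g k) (x k)) ^ 2)) ∧
    wnorm N1 N2 σ (∑ k, x k) ≤ Real.sqrt (∑ k, (wnorm N1 N2 σ (x k)) ^ 2) := by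
  constructor
  · obtain ⟨w, hw⟩ := hf
    obtain ⟨g, hg1, hg2, hg3, _, hg5⟩ := DW_good hw d x hx
    refine ⟨g, fun k => ?_, hg2, hg3, hg5⟩
    rcases hg1 k with h | h
    · exact ⟨w, h⟩
    · rw [h]
      exact DWh_zero N1 N2 σ
  · refine Real.sSup_le ?_ (Real.sqrt_nonneg _)
    rintro r ⟨h, ⟨w', hw'⟩, rfl⟩
    obtain ⟨g, hg1, _, _, hg4, hg5⟩ := DW_good hw' d x hx
    refine hg5.trans (Real.sqrt_le_sqrt (Finset.sum_le_sum fun k _ => ?_))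
    have h1 : dotp (g k) (x k) ≤ wnorm N1 N2 σ (x k) := by
      rcases hg1 k with hh | hh
      · exact dotp_le_wnorm N1 N2 σ (x k) ⟨w', hh⟩
      · rw [hh, dotp_zero]
        exact wnorm_nonneg N1 N2 σ (x k)
    exact pow_le_pow_left₀ (hg4 k) h1 2
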